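/- Let A be an n-dimensional (n > 3) non-unital associative algebra over ℂ that is filiform, i.e. dim A^i = n − i for all 2 ≤ i ≤ n. Then A has a basis e_1, …, e_n whose multiplication table is exactly one of the following four pairwise non-isomorphic tables (all unlisted products of basis vectors being zero): μ_{1,1}: e_i·e_j = e_{i+j} for 2 ≤ i+j ≤ n−1; μ_{1,2}: e_i·e_j = e_{i+j} for 2 ≤ i+j ≤ n−1 and e_n·e_n = e_{n−1}; μ_{1,3}: e_i·e_j = e_{i+j} for 2 ≤ i+j ≤ n−1 and e_1·e_n = e_{n−1}; μ_{1,4}: e_i·e_j = e_{i+j} for 2 ≤ i+j ≤ n−1, e_1·e_n = e_{n−1} and e_n·e_n = e_{n−1}. -/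
import Mathlib


variable (A : Type*) [NonUnitalRing A] [Module ℂ A] [SMulCommClass ℂ A A] [IsScalarTower ℂ A A]

/-- Product of two submodules of a non-unital algebra:
the span of all pairwise products. -/
def pmul (I J : Submodule ℂ A) : Submodule ℂ A :=
  Submodule.span ℂ (Set.image2 (· * ·) (I : Set A) (J : Set A))

/-- The series of powers `A^1 = A`, `A^{i+1} = Σ_{k=1}^{i} A^k · A^{i+1-k}`.
(`algPow A 0` is junk, set to `⊤`.) -/
def algPow : ℕ → Submodule ℂ A
  | 0 => ⊤
  | 1 => ⊤
  | n + 2 => ⨆ k : Fin (n + 1), pmul A (algPow (k + 1)) (algPow (n + 1 - k))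
  termination_by n => n
  decreasing_by
  · omega
  · omega

/-- An `n`-dimensional algebra is filiform if `dim A^i = n - i` for `2 ≤ i ≤ n`. -/
def Filiform (n : ℕ) : Prop :=
  ∀ i, 2 ≤ i → i ≤ n → Module.finrank ℂ (algPow A i) = n - i

/-- `e 1, …, e n` is a basis of `A` (indices `1,…,n`). -/
def IsBasisFam (n : ℕ) (e : ℕ → A) : Prop :=
  (LinearIndependent ℂ fun i : Fin n => e (i.1 + 1)) ∧
    Submodule.span ℂ (Set.range fun i : Fin n => e (i.1 + 1)) = ⊤

/-- The four filiform multiplication tables `μ_{1,1}, μ_{1,2}, μ_{1,3}, μ_{1,4}`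
(indexed by `r = 0,1,2,3`); all unlisted products of basis vectors are zero:
`μ_{1,1}`: `e_i e_j = e_{i+j}` for `2 ≤ i+j ≤ n-1`;
`μ_{1,2}`: additionally `e_n e_n = e_{n-1}`;
`μ_{1,3}`: additionally `e_1 e_n = e_{n-1}`;
`μ_{1,4}`: additionally `e_1 e_n = e_{n-1}` and `e_n e_n = e_{n-1}`. -/
def FiliformTable (n : ℕ) (r : Fin 4) (e : ℕ → A) : Prop :=
  ∀ i j, 1 ≤ i → i ≤ n → 1 ≤ j → j ≤ n →
    e i * e j =
      (if 2 ≤ i + j ∧ i + j ≤ n - 1 then e (i + j) else 0) +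
      (if (r = 1 ∨ r = 3) ∧ i = n ∧ j = n then e (n - 1) else 0) +
      (if (r = 2 ∨ r = 3) ∧ i = 1 ∧ j = n then e (n - 1) else 0)

section Aux

set_option linter.unusedSectionVars false
set_option linter.unusedVariables false
set_option linter.unnecessarySimpa false

variable {A}

theorem mul_mem_pmul {I J : Submodule ℂ A} {x y : A} (hx : x ∈ I) (hy : y ∈ J) :
    x * y ∈ pmul A I J :=
  Submodule.subset_span ⟨x, hx, y, hy, rfl⟩

theorem pmul_le {I J K : Submodule ℂ A} :
    pmul A I J ≤ K ↔ ∀ x ∈ I, ∀ y ∈ J, x * y ∈ K := by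
  constructor
  · intro h x hx y hy; exact h (mul_mem_pmul hx hy)
  · intro h
    refine Submodule.span_le.2 ?_
    rintro _ ⟨x, hx, y, hy, rfl⟩
    exact h x hx y hy

theorem pmul_mono {I J I' J' : Submodule ℂ A} (h1 : I ≤ I') (h2 : J ≤ J') :
    pmul A I J ≤ pmul A I' J' :=
  pmul_le.2 fun x hx y hy => mul_mem_pmul (h1 hx) (h2 hy)

theorem mem_pmul_of_mem_right {I J K : Submodule ℂ A} {x : A} (hx : x ∈ I)
    {w : A} (hw : w ∈ pmul A J K) : x * w ∈ pmul A (pmul A I J) K := by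
  induction hw using Submodule.span_induction with
  | mem z hz =>
    obtain ⟨y, hy, z', hz', rfl⟩ := hz
    rw [← mul_assoc]
    exact mul_mem_pmul (mul_mem_pmul hx hy) hz'
  | zero => simpa using Submodule.zero_mem _
  | add a b _ _ ha hb => rw [mul_add]; exact Submodule.add_mem _ ha hb
  | smul c a _ ha => rw [mul_smul_comm]; exact Submodule.smul_mem _ _ ha

theorem pmul_assoc (I J K : Submodule ℂ A) :
    pmul A (pmul A I J) K = pmul A I (pmul A J K) := by
  apply le_antisymm
  · refine pmul_le.2 fun w hw z hz => ?_
    induction hw using Submodule.span_induction with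
    | mem u hu =>
      obtain ⟨x, hx, y, hy, rfl⟩ := hu
      rw [mul_assoc]
      exact mul_mem_pmul hx (mul_mem_pmul hy hz)
    | zero => simpa using Submodule.zero_mem _
    | add a b _ _ ha hb => rw [add_mul]; exact Submodule.add_mem _ ha hb
    | smul c a _ ha => rw [smul_mul_assoc]; exact Submodule.smul_mem _ _ ha
  · refine pmul_le.2 fun x hx w hw => mem_pmul_of_mem_right hx hw

variable (A)

def lpow : ℕ → Submodule ℂ A
  | 0 => ⊤
  | 1 => ⊤
  | (k+2) => pmul A ⊤ (lpow (k+1))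

variable {A}

theorem lpow_succ_eq {k : ℕ} (hk : 1 ≤ k) : lpow A (k+1) = pmul A ⊤ (lpow A k) := by
  obtain ⟨m, hm⟩ := Nat.exists_eq_add_of_le hk
  subst hm
  rw [Nat.add_comm 1 m]
  rfl

theorem lpow_succ_le : ∀ k : ℕ, lpow A (k+1) ≤ lpow A k := by
  intro k
  induction k with
  | zero => exact le_top
  | succ m ih =>
    cases m with
    | zero => exact le_top
    | succ l =>
      show pmul A ⊤ (lpow A (l+2)) ≤ pmul A ⊤ (lpow A (l+1))
      exact pmul_mono le_rfl ih

theorem lpow_le_lpow {i j : ℕ} (h : i ≤ j) : lpow A j ≤ lpow A i := by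
  induction j with
  | zero => simpa [Nat.le_zero.1 h] using le_rfl
  | succ m ih =>
    rcases Nat.lt_or_ge i (m+1) with h' | h'
    · exact le_trans (lpow_succ_le m) (ih (by omega))
    · have : i = m + 1 := by omega
      simp [this]

theorem pmul_lpow_lpow : ∀ i j : ℕ, 1 ≤ i → 1 ≤ j →
    pmul A (lpow A i) (lpow A j) ≤ lpow A (i + j) := by
  intro i
  induction i with
  | zero => omega
  | succ m ih =>
    intro j _ hj
    cases m with
    | zero =>
      show pmul A (lpow A 1) (lpow A j) ≤ lpow A (0 + 1 + j)
      have h1 : (0:ℕ) + 1 + j = j + 1 := by omega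
      rw [h1, lpow_succ_eq hj]
      exact le_rfl
    | succ l =>
      have : lpow A (l+2) = pmul A ⊤ (lpow A (l+1)) := rfl
      rw [this, pmul_assoc]
      have h2 := ih j (by omega) hj
      calc pmul A ⊤ (pmul A (lpow A (l+1)) (lpow A j)) ≤ pmul A ⊤ (lpow A (l+1+j)) :=
            pmul_mono le_rfl h2
        _ = lpow A (l+2+j) := by rw [← lpow_succ_eq (by omega)]; ring_nf

theorem pmul_lpow_top_le {j : ℕ} (hj : 1 ≤ j) : pmul A (lpow A j) ⊤ ≤ lpow A (j+1) := by
  have : pmul A (lpow A j) (lpow A 1) ≤ lpow A (j+1) := pmul_lpow_lpow j 1 hj le_rfl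
  simpa [lpow] using this

theorem mul_mem_lpow_two (a b : A) : a * b ∈ lpow A 2 :=
  mul_mem_pmul trivial trivial

theorem algPow_eq_lpow : ∀ i : ℕ, 1 ≤ i → algPow A i = lpow A i := by
  intro i
  induction i using Nat.strong_induction_on with
  | _ i ih =>
    intro hi
    match i, hi with
    | 1, _ => rw [algPow]; rfl
    | (m+2), _ =>
      rw [show algPow A (m+2) = ⨆ k : Fin (m + 1), pmul A (algPow A (k + 1)) (algPow A (m + 1 - k)) from by rw [algPow]]
      apply le_antisymm
      · apply iSup_le
        intro k
        rw [ih (k+1) (by omega) (by omega), ih (m+1-k) (by omega) (by omega)]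
        have := pmul_lpow_lpow (A := A) (k+1) (m+1-k) (by omega) (by omega)
        have he : (k:ℕ) + 1 + (m + 1 - k) = m + 2 := by omega
        rwa [he] at this
      · have h0 : pmul A (algPow A (0+1)) (algPow A (m+1-0)) ≤ _ :=
          le_iSup (fun k : Fin (m+1) => pmul A (algPow A (k + 1)) (algPow A (m + 1 - k))) ⟨0, by omega⟩
        rw [ih 1 (by omega) (by omega), ih (m+1-0) (by omega) (by omega)] at h0
        simp only [Nat.sub_zero] at h0
        rw [lpow_succ_eq (by omega : 1 ≤ m+1)]
        exact le_trans (le_of_eq rfl) h0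

open Module

variable [FiniteDimensional ℂ A] {n : ℕ}

theorem finrank_span_singleton_le' (v : A) : finrank ℂ (Submodule.span ℂ {v}) ≤ 1 := by
  by_cases h : v = 0
  · rw [h, Submodule.span_zero_singleton]; simp
  · rw [finrank_span_singleton h]

theorem lpow_finrank (hfil : Filiform A n) {i : ℕ} (h2 : 2 ≤ i) (hi : i ≤ n) :
    finrank ℂ (lpow A i) = n - i := by
  rw [← algPow_eq_lpow i (by omega)]; exact hfil i h2 hi

theorem lpow_eq_bot (hn : 3 < n) (hfil : Filiform A n) {i : ℕ} (hi : n ≤ i) :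
    lpow A i = ⊥ := by
  have h1 : finrank ℂ (lpow A n) = 0 := by
    rw [lpow_finrank hfil (by omega) le_rfl]; omega
  have h2 : lpow A n = ⊥ := Submodule.finrank_eq_zero.1 h1
  exact le_bot_iff.1 (h2 ▸ lpow_le_lpow hi)

theorem lt_sup_span {p : Submodule ℂ A} {x : A} (hx : x ∉ p) :
    p < Submodule.span ℂ {x} ⊔ p := by
  refine lt_of_le_of_ne le_sup_right fun h => hx ?_
  rw [h]
  exact Submodule.mem_sup_left (Submodule.mem_span_singleton_self x)

theorem eq_span_sup_of_finrank {p q : Submodule ℂ A} {v : A} (hpq : p ≤ q) (hv : v ∈ q)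
    (hv' : v ∉ p) (hrank : finrank ℂ q ≤ finrank ℂ p + 1) :
    q = Submodule.span ℂ {v} ⊔ p := by
  have h1 : Submodule.span ℂ {v} ⊔ p ≤ q := sup_le ((Submodule.span_singleton_le_iff_mem v q).2 hv) hpq
  have h2 : p < Submodule.span ℂ {v} ⊔ p := lt_sup_span hv'
  have h3 := Submodule.finrank_lt_finrank_of_lt (lt_of_lt_of_le h2 h1 : p < q)
  have h4 := Submodule.finrank_lt_finrank_of_lt h2
  have h5 := Submodule.finrank_mono h1
  exact (Submodule.eq_of_le_of_finrank_le h1 (by omega)).symm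

theorem exists_not_mem_of_finrank_lt {p : Submodule ℂ A} (h : finrank ℂ p < finrank ℂ A) :
    ∃ x : A, x ∉ p := by
  by_contra hc
  push_neg at hc
  have : p = ⊤ := Submodule.eq_top_iff'.2 hc
  rw [this, finrank_top] at h
  omega

theorem exists_sq_not_mem (hn : 3 < n) (hdim : finrank ℂ A = n) (hfil : Filiform A n) :
    ∃ e : A, e * e ∉ lpow A 3 := by
  by_contra hc
  push_neg at hc
  have polar : ∀ a b : A, a * b + b * a ∈ lpow A 3 := by
    intro a b
    have key : a * b + b * a = (a+b)*(a+b) - a*a - b*b := by noncomm_ring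
    rw [key]
    exact Submodule.sub_mem _ (Submodule.sub_mem _ (hc (a+b)) (hc a)) (hc b)
  have d2 : finrank ℂ (lpow A 2) = n - 2 := lpow_finrank hfil (by omega) (by omega)
  have d3 : finrank ℂ (lpow A 3) = n - 3 := lpow_finrank hfil (by omega) (by omega)
  have d4 : finrank ℂ (lpow A 4) = n - 4 := lpow_finrank hfil (by omega) (by omega)
  -- pick x ∉ lp2
  obtain ⟨x, hx⟩ := exists_not_mem_of_finrank_lt (p := lpow A 2) (by omega)
  -- pick y outside span{x} ⊔ lp2
  have hr1 : finrank ℂ ((Submodule.span ℂ {x} ⊔ lpow A 2 : Submodule ℂ A)) < finrank ℂ A := by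
    have := Submodule.finrank_sup_add_finrank_inf_eq (Submodule.span ℂ {x}) (lpow A 2)
    have := finrank_span_singleton_le' x
    omega
  obtain ⟨y, hy⟩ := exists_not_mem_of_finrank_lt hr1
  -- T = span{x,y} ⊔ lp2 = ⊤
  have hT : Submodule.span ℂ {x} ⊔ (Submodule.span ℂ {y} ⊔ lpow A 2) = ⊤ := by
    apply Submodule.eq_top_of_finrank_eq
    have l1 : lpow A 2 < Submodule.span ℂ {x} ⊔ lpow A 2 := lt_sup_span hx
    have l2 : Submodule.span ℂ {x} ⊔ lpow A 2 <
        Submodule.span ℂ {y} ⊔ (Submodule.span ℂ {x} ⊔ lpow A 2) := lt_sup_span hy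
    have e1 := Submodule.finrank_lt_finrank_of_lt l1
    have e2 := Submodule.finrank_lt_finrank_of_lt l2
    have e3 : Submodule.span ℂ {x} ⊔ (Submodule.span ℂ {y} ⊔ lpow A 2) =
        Submodule.span ℂ {y} ⊔ (Submodule.span ℂ {x} ⊔ lpow A 2) := sup_left_comm _ _ _
    have e4 := Submodule.finrank_le (Submodule.span ℂ {y} ⊔ (Submodule.span ℂ {x} ⊔ lpow A 2))
    rw [e3]
    omega
  have decomp : ∀ a : A, ∃ c₁ c₂ : ℂ, ∃ p ∈ lpow A 2, a = c₁ • x + c₂ • y + p := by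
    intro a
    have : a ∈ Submodule.span ℂ {x} ⊔ (Submodule.span ℂ {y} ⊔ lpow A 2) := hT ▸ Submodule.mem_top
    obtain ⟨u, hu, w, hw, huw⟩ := Submodule.mem_sup.1 this
    obtain ⟨v, hv, p, hp, hvp⟩ := Submodule.mem_sup.1 hw
    obtain ⟨c₁, hc₁⟩ := Submodule.mem_span_singleton.1 hu
    obtain ⟨c₂, hc₂⟩ := Submodule.mem_span_singleton.1 hv
    exact ⟨c₁, c₂, p, hp, by rw [← huw, ← hvp, ← hc₁, ← hc₂, add_assoc]⟩
  have lp3_eq : lpow A 3 = pmul A ⊤ (lpow A 2) := lpow_succ_eq (by omega)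
  have lp4_eq : lpow A 4 = pmul A ⊤ (lpow A 3) := lpow_succ_eq (by omega)
  have memtl : ∀ a : A, ∀ s ∈ lpow A 3, a * s ∈ lpow A 4 := by
    intro a s hs; rw [lp4_eq]; exact mul_mem_pmul trivial hs
  have memlt : ∀ s ∈ lpow A 3, ∀ a : A, s * a ∈ lpow A 4 := by
    intro s hs a
    exact pmul_lpow_top_le (by omega) (mul_mem_pmul hs trivial)
  -- word facts
  have w1 : ∀ u v : A, u * (v * v) ∈ lpow A 4 := fun u v => memtl u _ (hc v)
  have w2 : x * (x * y) ∈ lpow A 4 := by rw [← mul_assoc]; exact memlt _ (hc x) y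
  have w3 : y * (y * x) ∈ lpow A 4 := by rw [← mul_assoc]; exact memlt _ (hc y) x
  have w4 : x * (y * x) ∈ lpow A 4 := by
    have key : x * (y * x) = (x*y + y*x) * x - y * (x * x) := by noncomm_ring
    rw [key]
    exact Submodule.sub_mem _ (memlt _ (polar x y) x) (memtl y _ (hc x))
  have w5 : y * (x * y) ∈ lpow A 4 := by
    have key : y * (x * y) = (x*y + y*x) * y - x * (y * y) := by noncomm_ring
    rw [key]
    exact Submodule.sub_mem _ (memlt _ (polar x y) y) (memtl x _ (hc y))
  -- products by words
  have xwords : ∀ m ∈ Submodule.span ℂ ({x*x, x*y, y*x, y*y} : Set A),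
      x * m ∈ lpow A 4 ∧ y * m ∈ lpow A 4 := by
    intro m hm
    induction hm using Submodule.span_induction with
    | mem z hz =>
      simp only [Set.mem_insert_iff, Set.mem_singleton_iff] at hz
      rcases hz with rfl | rfl | rfl | rfl
      · exact ⟨w1 x x, w1 y x⟩
      · exact ⟨w2, w5⟩
      · exact ⟨w4, w3⟩
      · exact ⟨w1 x y, w1 y y⟩
    | zero => simp
    | add a b _ _ ha hb =>
      exact ⟨by rw [mul_add]; exact Submodule.add_mem _ ha.1 hb.1,
             by rw [mul_add]; exact Submodule.add_mem _ ha.2 hb.2⟩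
    | smul c a _ ha =>
      exact ⟨by rw [mul_smul_comm]; exact Submodule.smul_mem _ _ ha.1,
             by rw [mul_smul_comm]; exact Submodule.smul_mem _ _ ha.2⟩
  -- lp2 ≤ span words ⊔ lp3
  have lp2_le : lpow A 2 ≤ Submodule.span ℂ ({x*x, x*y, y*x, y*y} : Set A) ⊔ lpow A 3 := by
    show pmul A ⊤ ⊤ ≤ _
    refine pmul_le.2 fun a _ b _ => ?_
    obtain ⟨c₁, c₂, p, hp, rfl⟩ := decomp a
    obtain ⟨d₁, d₂, q, hq, rfl⟩ := decomp b
    have expand : (c₁ • x + c₂ • y + p) * (d₁ • x + d₂ • y + q) =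
        ((c₁*d₁) • (x*x) + (c₁*d₂) • (x*y) + (c₂*d₁) • (y*x) + (c₂*d₂) • (y*y))
        + ((c₁ • x + c₂ • y) * q + p * (d₁ • x + d₂ • y + q)) := by
      simp only [mul_add, add_mul, smul_add, smul_mul_assoc, mul_smul_comm, smul_smul]
      module
    rw [expand]
    apply Submodule.add_mem
    · apply Submodule.mem_sup_left
      have m1 : x*x ∈ ({x*x, x*y, y*x, y*y} : Set A) := by simp
      have m2 : x*y ∈ ({x*x, x*y, y*x, y*y} : Set A) := by simp
      have m3 : y*x ∈ ({x*x, x*y, y*x, y*y} : Set A) := by simp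
      have m4 : y*y ∈ ({x*x, x*y, y*x, y*y} : Set A) := by simp
      exact Submodule.add_mem _ (Submodule.add_mem _ (Submodule.add_mem _
        (Submodule.smul_mem _ _ (Submodule.subset_span m1))
        (Submodule.smul_mem _ _ (Submodule.subset_span m2)))
        (Submodule.smul_mem _ _ (Submodule.subset_span m3)))
        (Submodule.smul_mem _ _ (Submodule.subset_span m4))
    · apply Submodule.mem_sup_right
      apply Submodule.add_mem
      · rw [lp3_eq]; exact mul_mem_pmul trivial hq
      · exact pmul_lpow_top_le (by omega) (mul_mem_pmul hp trivial)
  -- lp3 ≤ lp4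
  have lp34 : lpow A 3 ≤ lpow A 4 := by
    rw [lp3_eq]
    refine pmul_le.2 fun a _ w hw => ?_
    obtain ⟨c₁, c₂, p, hp, rfl⟩ := decomp a
    obtain ⟨m, hm, s, hs, hms⟩ := Submodule.mem_sup.1 (lp2_le hw)
    have expand : (c₁ • x + c₂ • y + p) * w = c₁ • (x * m) + c₂ • (y * m)
        + (c₁ • x + c₂ • y) * s + p * w := by
      rw [← hms]
      simp only [mul_add, add_mul, smul_add, smul_mul_assoc]
      module
    rw [expand]
    refine Submodule.add_mem _ (Submodule.add_mem _ (Submodule.add_mem _ ?_ ?_) ?_) ?_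
    · exact Submodule.smul_mem _ _ (xwords m hm).1
    · exact Submodule.smul_mem _ _ (xwords m hm).2
    · exact memtl _ _ hs
    · have h24 := pmul_lpow_lpow (A := A) 2 2 (by omega) (by omega)
      exact h24 (mul_mem_pmul hp hw)
  have := Submodule.finrank_mono lp34
  omega

variable (A) in
def pw (e : A) : ℕ → A
  | 0 => 0
  | 1 => e
  | (k+2) => e * pw e (k+1)

theorem pw_succ {e : A} {k : ℕ} (hk : 1 ≤ k) : pw A e (k+1) = e * pw A e k := by
  obtain ⟨m, hm⟩ := Nat.exists_eq_add_of_le hk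
  subst hm
  rw [Nat.add_comm 1 m]
  rfl

theorem pw_mem {e : A} : ∀ {i : ℕ}, 1 ≤ i → pw A e i ∈ lpow A i := by
  intro i
  induction i with
  | zero => omega
  | succ m ih =>
    intro _
    cases Nat.lt_or_ge m 1 with
    | inl h =>
      interval_cases m
      exact Submodule.mem_top
    | inr h =>
      rw [pw_succ h, lpow_succ_eq h]
      exact mul_mem_pmul trivial (ih h)

theorem pw_mul {e : A} : ∀ i : ℕ, 1 ≤ i → ∀ j : ℕ, 1 ≤ j →
    pw A e i * pw A e j = pw A e (i + j) := by
  intro i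
  induction i with
  | zero => omega
  | succ m ih =>
    intro _ j hj
    cases Nat.lt_or_ge m 1 with
    | inl h =>
      interval_cases m
      show e * pw A e j = _
      rw [← pw_succ hj, Nat.add_comm 1 j]
    | inr h =>
      rw [pw_succ h, mul_assoc, ih h j hj, ← pw_succ (by omega), Nat.add_right_comm]

theorem pw_eq_zero (hn : 3 < n) (hfil : Filiform A n) {e : A} {i : ℕ} (hi : n ≤ i) :
    pw A e i = 0 := by
  have h1 : pw A e i ∈ lpow A i := pw_mem (by omega)
  rw [lpow_eq_bot hn hfil hi] at h1
  simpa using h1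

theorem exists_compl_y (hdim : finrank ℂ A = n) (hn : 3 < n) (hfil : Filiform A n)
    {x : A} (hx : x ∉ lpow A 2) :
    ∃ y : A, Submodule.span ℂ {x} ⊔ (Submodule.span ℂ {y} ⊔ lpow A 2) = ⊤ := by
  have d2 : finrank ℂ (lpow A 2) = n - 2 := lpow_finrank hfil (by omega) (by omega)
  have hr1 : finrank ℂ ((Submodule.span ℂ {x} ⊔ lpow A 2 : Submodule ℂ A)) < finrank ℂ A := by
    have := Submodule.finrank_sup_add_finrank_inf_eq (Submodule.span ℂ {x}) (lpow A 2)
    have := finrank_span_singleton_le' x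
    omega
  obtain ⟨y, hy⟩ := exists_not_mem_of_finrank_lt hr1
  refine ⟨y, ?_⟩
  apply Submodule.eq_top_of_finrank_eq
  have l1 : lpow A 2 < Submodule.span ℂ {x} ⊔ lpow A 2 := lt_sup_span hx
  have l2 : Submodule.span ℂ {x} ⊔ lpow A 2 <
      Submodule.span ℂ {y} ⊔ (Submodule.span ℂ {x} ⊔ lpow A 2) := lt_sup_span hy
  have e1 := Submodule.finrank_lt_finrank_of_lt l1
  have e2 := Submodule.finrank_lt_finrank_of_lt l2
  have e3 : Submodule.span ℂ {x} ⊔ (Submodule.span ℂ {y} ⊔ lpow A 2) =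
      Submodule.span ℂ {y} ⊔ (Submodule.span ℂ {x} ⊔ lpow A 2) := sup_left_comm _ _ _
  have e4 := Submodule.finrank_le (Submodule.span ℂ {y} ⊔ (Submodule.span ℂ {x} ⊔ lpow A 2))
  rw [e3]
  omega

theorem top_decomp {x y : A}
    (hT : Submodule.span ℂ {x} ⊔ (Submodule.span ℂ {y} ⊔ lpow A 2) = ⊤) (a : A) :
    ∃ c₁ c₂ : ℂ, ∃ p ∈ lpow A 2, a = c₁ • x + c₂ • y + p := by
  have : a ∈ Submodule.span ℂ {x} ⊔ (Submodule.span ℂ {y} ⊔ lpow A 2) := hT ▸ Submodule.mem_top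
  obtain ⟨u, hu, w, hw, huw⟩ := Submodule.mem_sup.1 this
  obtain ⟨v, hv, p, hp, hvp⟩ := Submodule.mem_sup.1 hw
  obtain ⟨c₁, hc₁⟩ := Submodule.mem_span_singleton.1 hu
  obtain ⟨c₂, hc₂⟩ := Submodule.mem_span_singleton.1 hv
  exact ⟨c₁, c₂, p, hp, by rw [← huw, ← hvp, ← hc₁, ← hc₂, add_assoc]⟩

theorem pw_not_mem (hdim : finrank ℂ A = n) (hn : 3 < n) (hfil : Filiform A n)
    {e : A} (he2 : pw A e 2 ∉ lpow A 3) :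
    ∀ m, 2 ≤ m → m ≤ n - 1 → pw A e m ∉ lpow A (m+1) := by
  have he1 : e ∉ lpow A 2 := by
    intro h
    apply he2
    have : pw A e 2 = e * e := rfl
    rw [this]
    exact lpow_le_lpow (by omega) (pmul_lpow_lpow 2 2 (by omega) (by omega) (mul_mem_pmul h h))
  obtain ⟨y, hT⟩ := exists_compl_y hdim hn hfil he1
  have lp2span : lpow A 2 = Submodule.span ℂ {pw A e 2} ⊔ lpow A 3 := by
    refine eq_span_sup_of_finrank (lpow_succ_le 2) (pw_mem (by omega)) he2 ?_
    rw [lpow_finrank hfil (by omega) (by omega), lpow_finrank hfil (by omega) (by omega)]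
    omega
  intro m hm2
  induction m, hm2 using Nat.le_induction with
  | base => intro _; exact he2
  | succ m hm ih =>
    intro hmn
    have hmn' : m ≤ n - 1 := by omega
    have hpwm := ih hmn'
    by_contra h
    -- h : pw e (m+1) ∈ lpow (m+2)
    have lpmspan : lpow A m = Submodule.span ℂ {pw A e m} ⊔ lpow A (m+1) := by
      refine eq_span_sup_of_finrank (lpow_succ_le m) (pw_mem (by omega)) hpwm ?_
      rw [lpow_finrank hfil (by omega) (by omega), lpow_finrank hfil (by omega) (by omega)]
      omega
    have key : lpow A (m+1) ≤ lpow A (m+2) := by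
      rw [lpow_succ_eq (by omega : 1 ≤ m)]
      refine pmul_le.2 fun a _ v hv => ?_
      obtain ⟨c₁, c₂, p, hp, rfl⟩ := top_decomp hT a
      rw [lpmspan] at hv
      obtain ⟨u, hu, s, hs, huv⟩ := Submodule.mem_sup.1 hv
      obtain ⟨d, hd⟩ := Submodule.mem_span_singleton.1 hu
      have hv' : v = d • pw A e m + s := by rw [← huv, hd]
      have memts : ∀ a : A, a * s ∈ lpow A (m+2) := by
        intro a
        rw [lpow_succ_eq (by omega : 1 ≤ m+1)]
        exact mul_mem_pmul trivial hs
      have h1 : e * v ∈ lpow A (m+2) := by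
        rw [hv', mul_add, mul_smul_comm]
        apply Submodule.add_mem
        · apply Submodule.smul_mem
          rw [show e * pw A e m = pw A e (m+1) from by
            rw [← pw_succ (by omega : 1 ≤ m)]]
          exact h
        · exact memts e
      have h2 : y * v ∈ lpow A (m+2) := by
        rw [hv', mul_add, mul_smul_comm]
        apply Submodule.add_mem
        · apply Submodule.smul_mem
          -- y * pw e m = (y*e) * pw e (m-1)
          have hm1 : pw A e m = pw A e 1 * pw A e (m-1) := by
            rw [pw_mul 1 (by omega) (m-1) (by omega)]
            congr 1
            omega
          rw [hm1, show pw A e 1 = e from rfl, ← mul_assoc]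
          have hye : y * e ∈ lpow A 2 := mul_mem_lpow_two y e
          rw [lp2span] at hye
          obtain ⟨u2, hu2, s3, hs3, hu2s⟩ := Submodule.mem_sup.1 hye
          obtain ⟨α, hα⟩ := Submodule.mem_span_singleton.1 hu2
          have hye' : y * e = α • pw A e 2 + s3 := by rw [← hu2s, hα]
          rw [hye', add_mul, smul_mul_assoc]
          apply Submodule.add_mem
          · apply Submodule.smul_mem
            rw [pw_mul 2 (by omega) (m-1) (by omega), show 2 + (m-1) = m+1 from by omega]
            exact h
          · have : s3 * pw A e (m-1) ∈ pmul A (lpow A 3) (lpow A (m-1)) :=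
              mul_mem_pmul hs3 (pw_mem (by omega))
            have h3 := pmul_lpow_lpow (A := A) 3 (m-1) (by omega) (by omega)
            have heq : 3 + (m-1) = m + 2 := by omega
            rw [heq] at h3
            exact h3 this
        · exact memts y
      have h3 : p * v ∈ lpow A (m+2) := by
        have hmem : p * v ∈ pmul A (lpow A 2) (lpow A m) :=
          mul_mem_pmul hp (by rw [lpmspan]; exact hv)
        have hle := pmul_lpow_lpow (A := A) 2 m (by omega) (by omega)
        exact lpow_le_lpow (by omega) (hle hmem)
      have expand : (c₁ • e + c₂ • y + p) * v = c₁ • (e * v) + c₂ • (y * v) + p * v := by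
        rw [add_mul, add_mul, smul_mul_assoc, smul_mul_assoc]
      rw [expand]
      exact Submodule.add_mem _ (Submodule.add_mem _ (Submodule.smul_mem _ _ h1)
        (Submodule.smul_mem _ _ h2)) h3
    have r1 := Submodule.finrank_mono key
    rw [lpow_finrank hfil (by omega) (by omega), lpow_finrank hfil (by omega) (by omega)] at r1
    omega

theorem pw_mul_e {e : A} {k : ℕ} (hk : 1 ≤ k) : pw A e k * e = pw A e (k+1) :=
  pw_mul k hk 1 le_rfl

theorem lpow_span_step (hdim : finrank ℂ A = n) (hn : 3 < n) (hfil : Filiform A n)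
    {e : A} (hnot : ∀ m, 2 ≤ m → m ≤ n - 1 → pw A e m ∉ lpow A (m+1))
    {k : ℕ} (h2 : 2 ≤ k) (hk : k ≤ n - 1) :
    lpow A k = Submodule.span ℂ {pw A e k} ⊔ lpow A (k+1) := by
  refine eq_span_sup_of_finrank (lpow_succ_le k) (pw_mem (by omega)) (hnot k h2 hk) ?_
  rw [lpow_finrank hfil (by omega) (by omega), lpow_finrank hfil (by omega) (by omega)]
  omega

theorem exists_adapted (hdim : finrank ℂ A = n) (hn : 3 < n) (hfil : Filiform A n) :
    ∃ e f : A, ∃ β γ : ℂ,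
      (∀ i, 1 ≤ i → f * pw A e i = 0) ∧
      (e * f = β • pw A e (n-1)) ∧
      (∀ i, 2 ≤ i → i ≤ n-1 → pw A e i * f = 0) ∧
      (f * f = γ • pw A e (n-1)) ∧
      (∀ m, 2 ≤ m → m ≤ n - 1 → pw A e m ∉ lpow A (m+1)) ∧
      (Submodule.span ℂ {f} ⊔ (Submodule.span ℂ {e} ⊔ lpow A 2) = ⊤) := by
  obtain ⟨e, he2'⟩ := exists_sq_not_mem hn hdim hfil
  have he2 : pw A e 2 ∉ lpow A 3 := he2'
  have hnot := pw_not_mem hdim hn hfil he2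
  have he1 : e ∉ lpow A 2 := by
    intro h
    exact he2 (lpow_le_lpow (by omega)
      (pmul_lpow_lpow 2 2 (by omega) (by omega) (mul_mem_pmul h h)))
  have d2 : finrank ℂ (lpow A 2) = n - 2 := lpow_finrank hfil (by omega) (by omega)
  have d3 : finrank ℂ (lpow A 3) = n - 3 := lpow_finrank hfil (by omega) (by omega)
  have dn1 : finrank ℂ (lpow A (n-1)) = 1 := by
    rw [lpow_finrank hfil (by omega) (by omega)]; omega
  -- P = span{e} ⊔ lp2
  set P : Submodule ℂ A := Submodule.span ℂ {e} ⊔ lpow A 2 with hP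
  have hPrank : finrank ℂ P = n - 1 := by
    have l1 := Submodule.finrank_lt_finrank_of_lt (lt_sup_span he1)
    have l2 := Submodule.finrank_sup_add_finrank_inf_eq (Submodule.span ℂ {e}) (lpow A 2)
    have l3 := finrank_span_singleton_le' e
    rw [← hP] at l1 l2
    omega
  -- the right-multiplication map
  set Re : A →ₗ[ℂ] A := LinearMap.mulRight ℂ e with hRe
  have hReapp : ∀ a : A, Re a = a * e := fun a => rfl
  have hrange : LinearMap.range Re = lpow A 2 := by
    apply le_antisymm
    · rintro _ ⟨a, rfl⟩
      exact mul_mem_lpow_two a e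
    · have S : ∀ d : ℕ, d ≤ n - 2 → lpow A (n - d) ≤ LinearMap.range Re := by
        intro d
        induction d with
        | zero =>
          intro _
          simp only [Nat.sub_zero]
          rw [lpow_eq_bot hn hfil le_rfl]
          exact bot_le
        | succ m ih =>
          intro hm
          set k := n - (m+1) with hk
          have hk2 : 2 ≤ k := by omega
          have hk1 : k ≤ n - 1 := by omega
          rw [lpow_span_step hdim hn hfil hnot hk2 hk1]
          apply sup_le
          · rw [Submodule.span_singleton_le_iff_mem]
            refine ⟨pw A e (k-1), ?_⟩
            rw [hReapp, pw_mul_e (by omega), show k - 1 + 1 = k from by omega]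
          · have : k + 1 = n - m := by omega
            rw [this]
            exact ih (by omega)
      have := S (n-2) le_rfl
      rwa [show n - (n-2) = 2 from by omega] at this
  have hker : finrank ℂ (LinearMap.ker Re) = 2 := by
    have := LinearMap.finrank_range_add_finrank_ker Re
    rw [hrange, hdim, d2] at this
    omega
  -- step-up lemma
  have Rstep : ∀ k, 2 ≤ k → k ≤ n - 2 → ∀ v ∈ lpow A k, v * e = 0 → v ∈ lpow A (k+1) := by
    intro k hk2 hkn v hv hve
    rw [lpow_span_step hdim hn hfil hnot hk2 (by omega)] at hv
    obtain ⟨u, hu, s, hs, hus⟩ := Submodule.mem_sup.1 hv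
    obtain ⟨c, hc⟩ := Submodule.mem_span_singleton.1 hu
    have hv' : v = c • pw A e k + s := by rw [← hus, hc]
    have hse : s * e ∈ lpow A (k+2) := by
      have : s * e ∈ pmul A (lpow A (k+1)) ⊤ := mul_mem_pmul hs trivial
      exact pmul_lpow_top_le (by omega) this
    have hpk : c • pw A e (k+1) ∈ lpow A (k+2) := by
      have h0 : c • pw A e (k+1) = v * e - s * e := by
        rw [hv', add_mul, smul_mul_assoc, pw_mul_e (by omega)]
        abel
      rw [h0, hve, zero_sub]
      exact Submodule.neg_mem _ hse
    have hc0 : c = 0 := by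
      by_contra hc0
      apply hnot (k+1) (by omega) (by omega)
      have := Submodule.smul_mem (lpow A (k+2)) c⁻¹ hpk
      rw [smul_smul, inv_mul_cancel₀ hc0, one_smul] at this
      exact lpow_le_lpow (by omega) this
    rw [hv', hc0, zero_smul, zero_add]
    exact hs
  have Riter : ∀ v ∈ lpow A 2, v * e = 0 → v ∈ lpow A (n-1) := by
    have key : ∀ j : ℕ, 2 + j ≤ n - 1 → ∀ v ∈ lpow A 2, v * e = 0 → v ∈ lpow A (2+j) := by
      intro j
      induction j with
      | zero => intro _ v hv _; exact hv
      | succ m ih =>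
        intro hj v hv hve
        have h1 := ih (by omega) v hv hve
        have := Rstep (2+m) (by omega) (by omega) v h1 hve
        rwa [show 2 + (m+1) = 2 + m + 1 from by omega]
    intro v hv hve
    have := key (n-3) (by omega) v hv hve
    rwa [show 2 + (n-3) = n - 1 from by omega] at this
  -- K ⊓ P small
  have hKP : LinearMap.ker Re ⊓ P ≤ lpow A (n-1) := by
    rintro v ⟨hvK, hvP⟩
    have hve : v * e = 0 := by rw [← hReapp]; exact hvK
    obtain ⟨u, hu, p, hp, hup⟩ := Submodule.mem_sup.1 hvP
    obtain ⟨c, hc⟩ := Submodule.mem_span_singleton.1 hu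
    have hv' : v = c • e + p := by rw [← hup, hc]
    have hc0 : c = 0 := by
      by_contra hc0
      apply he2
      have h1 : c • pw A e 2 = v * e - p * e := by
        rw [hv', add_mul, smul_mul_assoc]
        show c • (e * e) = c • (e * e) + p * e - (p * e)
        abel
      have hpe : p * e ∈ lpow A 3 := by
        have : p * e ∈ pmul A (lpow A 2) ⊤ := mul_mem_pmul hp trivial
        exact pmul_lpow_top_le (by omega) this
      have h2 : c • pw A e 2 ∈ lpow A 3 := by
        rw [h1, hve, zero_sub]; exact Submodule.neg_mem _ hpe
      have := Submodule.smul_mem (lpow A 3) c⁻¹ h2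
      rwa [smul_smul, inv_mul_cancel₀ hc0, one_smul] at this
    have hv2 : v ∈ lpow A 2 := by rw [hv', hc0, zero_smul, zero_add]; exact hp
    exact Riter v hv2 hve
  -- get f
  have hexf : ∃ f ∈ LinearMap.ker Re, f ∉ P := by
    by_contra hcc
    push_neg at hcc
    have hle : LinearMap.ker Re ≤ P := hcc
    have : LinearMap.ker Re ⊓ P = LinearMap.ker Re := inf_eq_left.2 hle
    have h2 := Submodule.finrank_mono hKP
    rw [this, hker, dn1] at h2
    omega
  obtain ⟨f, hfK, hfP⟩ := hexf
  have hfe : f * e = 0 := by rw [← hReapp]; exact hfK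
  -- f * pw i = 0
  have hfpw : ∀ i, 1 ≤ i → f * pw A e i = 0 := by
    intro i hi
    rcases Nat.lt_or_ge i 2 with h | h
    · interval_cases i
      exact hfe
    · have : pw A e i = pw A e 1 * pw A e (i-1) := by
        rw [pw_mul 1 (by omega) (i-1) (by omega), show 1 + (i-1) = i from by omega]
      rw [this, ← mul_assoc, show pw A e 1 = e from rfl, hfe, zero_mul]
  -- lp(n-1) = span pw(n-1)
  have hlpn1 : lpow A (n-1) = Submodule.span ℂ {pw A e (n-1)} := by
    have := lpow_span_step hdim hn hfil hnot (k := n-1) (by omega) le_rfl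
    rw [show n - 1 + 1 = n from by omega, lpow_eq_bot hn hfil le_rfl, sup_bot_eq] at this
    exact this
  -- e * f
  have hef' : e * f ∈ lpow A (n-1) := by
    apply Riter _ (mul_mem_lpow_two e f)
    rw [mul_assoc, hfe, mul_zero]
  rw [hlpn1] at hef'
  obtain ⟨β, hβ⟩ := Submodule.mem_span_singleton.1 hef'
  -- f * f
  have hff' : f * f ∈ lpow A (n-1) := by
    apply Riter _ (mul_mem_lpow_two f f)
    rw [mul_assoc, hfe, mul_zero]
  rw [hlpn1] at hff'
  obtain ⟨γ, hγ⟩ := Submodule.mem_span_singleton.1 hff'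
  -- pw i * f = 0 for 2 ≤ i ≤ n-1
  have hpwf : ∀ i, 2 ≤ i → i ≤ n-1 → pw A e i * f = 0 := by
    intro i h2 hi
    have h1 : pw A e i = pw A e (i-1) * pw A e 1 := by
      rw [pw_mul (i-1) (by omega) 1 (by omega), show i - 1 + 1 = i from by omega]
    rw [h1, show pw A e 1 = e from rfl, mul_assoc, ← hβ, mul_smul_comm,
      pw_mul (i-1) (by omega) (n-1) (by omega), pw_eq_zero hn hfil (by omega), smul_zero]
  -- top
  have htop : Submodule.span ℂ {f} ⊔ (Submodule.span ℂ {e} ⊔ lpow A 2) = ⊤ := by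
    apply Submodule.eq_top_of_finrank_eq
    have l1 := Submodule.finrank_lt_finrank_of_lt (lt_sup_span hfP)
    have l2 := Submodule.finrank_le (Submodule.span ℂ {f} ⊔ P)
    rw [← hP]
    omega
  exact ⟨e, f, β, γ, hfpw, hβ.symm, hpwf, hγ.symm, hnot, htop⟩

theorem normal_form (hdim : finrank ℂ A = n) (hn : 3 < n) (hfil : Filiform A n)
    {e f : A} {β γ : ℂ}
    (hfpw : ∀ i, 1 ≤ i → f * pw A e i = 0)
    (hef : e * f = β • pw A e (n-1))
    (hpwf : ∀ i, 2 ≤ i → i ≤ n-1 → pw A e i * f = 0)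
    (hff : f * f = γ • pw A e (n-1))
    (hnot : ∀ m, 2 ≤ m → m ≤ n - 1 → pw A e m ∉ lpow A (m+1))
    (htop : Submodule.span ℂ {f} ⊔ (Submodule.span ℂ {e} ⊔ lpow A 2) = ⊤)
    (r : Fin 4) (t s : ℂ) (ht : t ≠ 0) (hs : s ≠ 0)
    (cond1 : t * s * β = if r = 2 ∨ r = 3 then t^(n-1) else 0)
    (cond2 : s * s * γ = if r = 1 ∨ r = 3 then t^(n-1) else 0) :
    ∃ efam : ℕ → A, IsBasisFam A n efam ∧ FiliformTable A n r efam := by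
  set efam : ℕ → A := fun i => if i = n then s • f else t^i • pw A e i with hefam
  have hefn : efam n = s • f := by simp [hefam]
  have hefk : ∀ k, k ≠ n → efam k = t^k • pw A e k := by
    intro k hk; simp [hefam, hk]
  -- span
  have hspan : Submodule.span ℂ (Set.range fun i : Fin n => efam (i.1 + 1)) = ⊤ := by
    set V := Submodule.span ℂ (Set.range fun i : Fin n => efam (i.1 + 1)) with hV
    have hmem : ∀ k, 1 ≤ k → k ≤ n → efam k ∈ V := by
      intro k h1 h2
      apply Submodule.subset_span
      refine ⟨⟨k-1, by omega⟩, ?_⟩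
      show efam (k - 1 + 1) = efam k
      congr 1
      omega
    have hfV : f ∈ V := by
      have h1 := V.smul_mem s⁻¹ (hmem n (by omega) le_rfl)
      rwa [hefn, smul_smul, inv_mul_cancel₀ hs, one_smul] at h1
    have heV : e ∈ V := by
      have h1 := V.smul_mem (t^1)⁻¹ (hmem 1 le_rfl (by omega))
      rwa [hefk 1 (by omega), smul_smul, inv_mul_cancel₀ (pow_ne_zero 1 ht), one_smul] at h1
    have hpwV : ∀ k, 2 ≤ k → k ≤ n-1 → pw A e k ∈ V := by
      intro k h1 h2
      have h3 := V.smul_mem (t^k)⁻¹ (hmem k (by omega) (by omega))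
      rwa [hefk k (by omega), smul_smul, inv_mul_cancel₀ (pow_ne_zero k ht), one_smul] at h3
    have hlp2V : lpow A 2 ≤ V := by
      have S : ∀ d : ℕ, d ≤ n - 2 → lpow A (n - d) ≤ V := by
        intro d
        induction d with
        | zero =>
          intro _
          simp only [Nat.sub_zero]
          rw [lpow_eq_bot hn hfil le_rfl]
          exact bot_le
        | succ m ih =>
          intro hm
          rw [lpow_span_step hdim hn hfil hnot (k := n - (m+1)) (show 2 ≤ n - (m+1) from by omega) (show n - (m+1) ≤ n - 1 from by omega)]
          apply sup_le
          · rw [Submodule.span_singleton_le_iff_mem]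
            exact hpwV (n - (m+1)) (by omega) (by omega)
          · rw [show n - (m+1) + 1 = n - m from by omega]
            exact ih (by omega)
      have := S (n-2) le_rfl
      rwa [show n - (n-2) = 2 from by omega] at this
    rw [← top_le_iff, ← htop]
    refine sup_le ?_ (sup_le ?_ hlp2V) <;>
      rw [Submodule.span_singleton_le_iff_mem]
    · exact hfV
    · exact heV
  refine ⟨efam, ⟨?_, hspan⟩, ?_⟩
  · exact linearIndependent_of_top_le_span_of_card_eq_finrank (le_of_eq hspan.symm)
      (by simp [hdim])
  -- table
  intro i j h1i hin h1j hjn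
  have hpw0 : ∀ m, n ≤ m → pw A e m = 0 := fun m hm => pw_eq_zero hn hfil hm
  by_cases hi : i = n
  · by_cases hj : j = n
    · -- i = j = n
      rw [hi, hj, hefn, smul_mul_smul_comm, hff, smul_smul]
      rw [if_neg (show ¬(2 ≤ n + n ∧ n + n ≤ n - 1) from by omega),
        if_neg (show ¬((r = 2 ∨ r = 3) ∧ n = 1 ∧ n = n) from by rintro ⟨-, h, -⟩; omega),
        zero_add, add_zero]
      by_cases hr : r = 1 ∨ r = 3
      · rw [if_pos (show (r = 1 ∨ r = 3) ∧ n = n ∧ n = n from ⟨hr, rfl, rfl⟩),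
          hefk (n-1) (by omega)]
        rw [if_pos hr] at cond2
        rw [cond2]
      · rw [if_neg (show ¬((r = 1 ∨ r = 3) ∧ n = n ∧ n = n) from by
          rintro ⟨h, -, -⟩; exact hr h)]
        rw [if_neg hr] at cond2
        rw [cond2, zero_smul]
    · -- i = n, j < n
      rw [hi, hefn, hefk j hj, smul_mul_smul_comm, hfpw j h1j, smul_zero]
      rw [if_neg (show ¬(2 ≤ n + j ∧ n + j ≤ n - 1) from by omega),
        if_neg (show ¬((r = 1 ∨ r = 3) ∧ n = n ∧ j = n) from by rintro ⟨-, -, h⟩; exact hj h),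
        if_neg (show ¬((r = 2 ∨ r = 3) ∧ n = 1 ∧ j = n) from by rintro ⟨-, h, -⟩; omega)]
      simp
  · by_cases hj : j = n
    · rcases Nat.lt_or_ge i 2 with h2 | h2
      · -- i = 1
        have hi1 : i = 1 := by omega
        rw [hi1, hj, hefk 1 (show (1:ℕ) ≠ n from by omega), hefn, smul_mul_smul_comm, pow_one]
        show (t * s) • (e * f) = _
        rw [hef, smul_smul]
        rw [if_neg (show ¬(2 ≤ 1 + n ∧ 1 + n ≤ n - 1) from by omega),
          if_neg (show ¬((r = 1 ∨ r = 3) ∧ 1 = n ∧ n = n) from by rintro ⟨-, h, -⟩; omega),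
          zero_add, zero_add]
        by_cases hr : r = 2 ∨ r = 3
        · rw [if_pos (show (r = 2 ∨ r = 3) ∧ 1 = 1 ∧ n = n from ⟨hr, rfl, rfl⟩),
            hefk (n-1) (by omega)]
          rw [if_pos hr] at cond1
          rw [cond1]
        · rw [if_neg (show ¬((r = 2 ∨ r = 3) ∧ 1 = 1 ∧ n = n) from by
            rintro ⟨h, -, -⟩; exact hr h)]
          rw [if_neg hr] at cond1
          rw [cond1, zero_smul]
      · -- 2 ≤ i ≤ n-1
        rw [hj, hefk i hi, hefn, smul_mul_smul_comm, hpwf i h2 (by omega), smul_zero]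
        rw [if_neg (show ¬(2 ≤ i + n ∧ i + n ≤ n - 1) from by omega),
          if_neg (show ¬((r = 1 ∨ r = 3) ∧ i = n ∧ n = n) from by rintro ⟨-, h, -⟩; exact hi h),
          if_neg (show ¬((r = 2 ∨ r = 3) ∧ i = 1 ∧ n = n) from by rintro ⟨-, h, -⟩; omega)]
        simp
    · -- i, j < n
      rw [hefk i hi, hefk j hj, smul_mul_smul_comm, pw_mul i (by omega) j (by omega), ← pow_add]
      rw [if_neg (show ¬((r = 1 ∨ r = 3) ∧ i = n ∧ j = n) from by rintro ⟨-, h, -⟩; exact hi h),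
        if_neg (show ¬((r = 2 ∨ r = 3) ∧ i = 1 ∧ j = n) from by rintro ⟨-, -, h⟩; exact hj h),
        add_zero, add_zero]
      by_cases hij : i + j ≤ n - 1
      · rw [if_pos (show 2 ≤ i + j ∧ i + j ≤ n - 1 from ⟨by omega, hij⟩),
          hefk (i+j) (by omega)]
      · rw [if_neg (show ¬(2 ≤ i + j ∧ i + j ≤ n - 1) from by rintro ⟨-, h⟩; omega),
          hpw0 (i+j) (by omega), smul_zero]

theorem exists_realization (hdim : finrank ℂ A = n) (hn : 3 < n) (hfil : Filiform A n) :
    ∃ r : Fin 4, ∃ efam : ℕ → A, IsBasisFam A n efam ∧ FiliformTable A n r efam := by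
  obtain ⟨e, f, β, γ, hfpw, hef, hpwf, hff, hnot, htop⟩ := exists_adapted hdim hn hfil
  by_cases hβ : β = 0
  · by_cases hγ : γ = 0
    · refine ⟨0, normal_form hdim hn hfil hfpw hef hpwf hff hnot htop 0 1 1
        one_ne_zero one_ne_zero ?_ ?_⟩
      · rw [if_neg (by decide : ¬((0:Fin 4) = 2 ∨ (0:Fin 4) = 3)), hβ, mul_zero]
      · rw [if_neg (by decide : ¬((0:Fin 4) = 1 ∨ (0:Fin 4) = 3)), hγ, mul_zero]
    · obtain ⟨s, hs2⟩ := Complex.isAlgClosed.exists_pow_nat_eq γ⁻¹ (by norm_num : 0 < 2)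
      have hs : s ≠ 0 := by
        intro h
        rw [h, zero_pow (by norm_num)] at hs2
        exact inv_ne_zero hγ hs2.symm
      refine ⟨1, normal_form hdim hn hfil hfpw hef hpwf hff hnot htop 1 1 s
        one_ne_zero hs ?_ ?_⟩
      · rw [if_neg (by decide : ¬((1:Fin 4) = 2 ∨ (1:Fin 4) = 3)), hβ, mul_zero]
      · rw [if_pos (by decide : ((1:Fin 4) = 1 ∨ (1:Fin 4) = 3)), one_pow, ← pow_two, hs2,
          inv_mul_cancel₀ hγ]
  · by_cases hγ : γ = 0
    · refine ⟨2, normal_form hdim hn hfil hfpw hef hpwf hff hnot htop 2 1 β⁻¹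
        one_ne_zero (inv_ne_zero hβ) ?_ ?_⟩
      · rw [if_pos (by decide : ((2:Fin 4) = 2 ∨ (2:Fin 4) = 3)), one_pow, one_mul,
          inv_mul_cancel₀ hβ]
      · rw [if_neg (by decide : ¬((2:Fin 4) = 1 ∨ (2:Fin 4) = 3)), hγ, mul_zero]
    · obtain ⟨t, ht3⟩ := Complex.isAlgClosed.exists_pow_nat_eq (β * β * γ⁻¹)
        (show 0 < n - 3 from by omega)
      have ht : t ≠ 0 := by
        intro h
        rw [h, zero_pow (by omega : n - 3 ≠ 0)] at ht3
        have : β * β * γ⁻¹ ≠ 0 := by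
          apply mul_ne_zero (mul_ne_zero hβ hβ) (inv_ne_zero hγ)
        exact this ht3.symm
      refine ⟨3, normal_form hdim hn hfil hfpw hef hpwf hff hnot htop 3 t (t^(n-2) * β⁻¹)
        ht (mul_ne_zero (pow_ne_zero _ ht) (inv_ne_zero hβ)) ?_ ?_⟩
      · rw [if_pos (by decide : ((3:Fin 4) = 2 ∨ (3:Fin 4) = 3))]
        have h1 : t * (t^(n-2) * β⁻¹) * β = t * t^(n-2) * (β⁻¹ * β) := by ring
        rw [h1, inv_mul_cancel₀ hβ, mul_one, ← pow_succ']
        congr 1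
        omega
      · rw [if_pos (by decide : ((3:Fin 4) = 1 ∨ (3:Fin 4) = 3))]
        have h1 : t^(n-2) * t^(n-2) = t^(n-1) * t^(n-3) := by
          rw [← pow_add, ← pow_add]
          congr 1
          omega
        calc t^(n-2) * β⁻¹ * (t^(n-2) * β⁻¹) * γ
            = t^(n-2) * t^(n-2) * (β⁻¹ * β⁻¹ * γ) := by ring
          _ = t^(n-1) * (t^(n-3) * (β⁻¹ * β⁻¹ * γ)) := by rw [h1]; ring
          _ = t^(n-1) * (β * β * γ⁻¹ * (β⁻¹ * β⁻¹ * γ)) := by rw [ht3]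
          _ = t^(n-1) := by field_simp

section Invariants

variable {n : ℕ} {r : Fin 4} {e : ℕ → A}

omit [FiniteDimensional ℂ A]

theorem table_comm (hn : 3 < n) (hB : IsBasisFam A n e) (hT : FiliformTable A n r e)
    (hr : r = 0 ∨ r = 1) : ∀ x y : A, x * y = y * x := by
  have c3 : ¬(r = 2 ∨ r = 3) := by rcases hr with rfl | rfl <;> decide
  have key : ∀ i j : Fin n, e (i.1+1) * e (j.1+1) = e (j.1+1) * e (i.1+1) := by
    intro i j
    rw [hT (i.1+1) (j.1+1) (by omega) (by omega) (by omega) (by omega),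
      hT (j.1+1) (i.1+1) (by omega) (by omega) (by omega) (by omega)]
    rw [if_neg (show ¬((r = 2 ∨ r = 3) ∧ i.1+1 = 1 ∧ j.1+1 = n) from fun h => c3 h.1),
      if_neg (show ¬((r = 2 ∨ r = 3) ∧ j.1+1 = 1 ∧ i.1+1 = n) from fun h => c3 h.1),
      add_zero, add_zero]
    congr 1
    · rw [Nat.add_comm (i.1+1) (j.1+1)]
    · exact if_congr (by tauto) rfl rfl
  have hM : (LinearMap.mul ℂ A) = (LinearMap.mul ℂ A).flip := by
    apply LinearMap.ext_on hB.2
    rintro x ⟨i, rfl⟩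
    apply LinearMap.ext_on hB.2
    rintro y ⟨j, rfl⟩
    simp only [LinearMap.mul_apply', LinearMap.flip_apply]
    exact key i j
  intro x y
  have h1 := LinearMap.congr_fun (LinearMap.congr_fun hM x) y
  simpa only [LinearMap.mul_apply', LinearMap.flip_apply] using h1

theorem table_e_ne_zero (hn : 3 < n) (hB : IsBasisFam A n e) {k : ℕ} (h1 : 1 ≤ k)
    (h2 : k ≤ n) : e k ≠ 0 := by
  have h3 := hB.1.ne_zero ⟨k-1, by omega⟩
  rwa [show k - 1 + 1 = k from by omega] at h3

theorem table_noncomm (hn : 3 < n) (hB : IsBasisFam A n e) (hT : FiliformTable A n r e)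
    (hr : r = 2 ∨ r = 3) : ∃ x y : A, x * y ≠ y * x := by
  refine ⟨e 1, e n, ?_⟩
  have h1 : e 1 * e n = e (n-1) := by
    rw [hT 1 n (by omega) (by omega) (by omega) (by omega),
      if_neg (show ¬(2 ≤ 1 + n ∧ 1 + n ≤ n - 1) from by omega),
      if_neg (show ¬((r = 1 ∨ r = 3) ∧ 1 = n ∧ n = n) from by rintro ⟨-, h, -⟩; omega),
      if_pos (show (r = 2 ∨ r = 3) ∧ 1 = 1 ∧ n = n from ⟨hr, rfl, rfl⟩), zero_add, zero_add]
  have h2 : e n * e 1 = 0 := by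
    rw [hT n 1 (by omega) (by omega) (by omega) (by omega),
      if_neg (show ¬(2 ≤ n + 1 ∧ n + 1 ≤ n - 1) from by omega),
      if_neg (show ¬((r = 1 ∨ r = 3) ∧ n = n ∧ 1 = n) from by rintro ⟨-, -, h⟩; omega),
      if_neg (show ¬((r = 2 ∨ r = 3) ∧ n = 1 ∧ 1 = n) from by rintro ⟨-, h, -⟩; omega)]
    simp
  rw [h1, h2]
  exact table_e_ne_zero hn hB (by omega) (by omega)

theorem table_ker (hn : 3 < n) (hB : IsBasisFam A n e) (hT : FiliformTable A n r e) :
    finrank ℂ (LinearMap.ker (LinearMap.mul ℂ A)) = if r = 0 ∨ r = 2 then 2 else 1 := by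
  classical
  have hen1 : e (n-1) ≠ 0 := table_e_ne_zero hn hB (by omega) (by omega)
  set b : Basis (Fin n) ℂ A := Basis.mk hB.1 (le_of_eq hB.2.symm) with hbdef
  have hbv : ∀ i : Fin n, b i = e (i.1+1) := fun i => by
    rw [hbdef, Basis.coe_mk]
  have mem_ker_iff : ∀ x : A, x ∈ LinearMap.ker (LinearMap.mul ℂ A) ↔ ∀ y, x * y = 0 := by
    intro x
    rw [LinearMap.mem_ker]
    constructor
    · intro h y
      have := LinearMap.congr_fun h y
      simpa only [LinearMap.mul_apply', LinearMap.zero_apply] using this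
    · intro h
      apply LinearMap.ext
      intro y
      simpa only [LinearMap.mul_apply', LinearMap.zero_apply] using h y
  have left_ann : ∀ x : A, (∀ j : Fin n, x * e (j.1+1) = 0) →
      x ∈ LinearMap.ker (LinearMap.mul ℂ A) := by
    intro x hx
    rw [LinearMap.mem_ker]
    apply LinearMap.ext_on hB.2
    rintro y ⟨j, rfl⟩
    simpa only [LinearMap.mul_apply', LinearMap.zero_apply] using hx j
  -- e (n-1) is in the kernel
  have z1 : ∀ j : Fin n, e (n-1) * e (j.1+1) = 0 := by
    intro j
    rw [hT (n-1) (j.1+1) (by omega) (by omega) (by omega) (by omega),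
      if_neg (show ¬(2 ≤ (n-1) + (j.1+1) ∧ (n-1) + (j.1+1) ≤ n - 1) from by omega),
      if_neg (show ¬((r = 1 ∨ r = 3) ∧ n-1 = n ∧ j.1+1 = n) from by rintro ⟨-, h, -⟩; omega),
      if_neg (show ¬((r = 2 ∨ r = 3) ∧ n-1 = 1 ∧ j.1+1 = n) from by rintro ⟨-, h, -⟩; omega)]
    simp
  have hken1 : e (n-1) ∈ LinearMap.ker (LinearMap.mul ℂ A) := left_ann _ z1
  -- kernel elements are combinations of e (n-1) and e n
  have ker_sub : ∀ x ∈ LinearMap.ker (LinearMap.mul ℂ A),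
      ∃ c₁ c₂ : ℂ, x = c₁ • e (n-1) + c₂ • e n := by
    intro x hx
    have hprod : ∀ y, x * y = 0 := (mem_ker_iff x).1 hx
    set c := b.repr x with hc
    set w : Fin n → A := fun i => if h : i.1 + 2 ≤ n - 1 then b ⟨i.1+1, by omega⟩ else 0
      with hw
    have hbw : ∀ i : Fin n, b i * e 1 = w i := by
      intro i
      rw [hbv i, hT (i.1+1) 1 (by omega) (by omega) (by omega) (by omega),
        if_neg (show ¬((r = 1 ∨ r = 3) ∧ i.1+1 = n ∧ 1 = n) from by rintro ⟨-, -, h⟩; omega),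
        if_neg (show ¬((r = 2 ∨ r = 3) ∧ i.1+1 = 1 ∧ 1 = n) from by rintro ⟨-, -, h⟩; omega),
        add_zero, add_zero]
      by_cases hcase : i.1 + 2 ≤ n - 1
      · rw [if_pos (show 2 ≤ (i.1+1) + 1 ∧ (i.1+1) + 1 ≤ n-1 from ⟨by omega, by omega⟩),
          show w i = b ⟨i.1+1, by omega⟩ from dif_pos hcase, hbv ⟨i.1+1, by omega⟩]
      · rw [if_neg (show ¬(2 ≤ (i.1+1) + 1 ∧ (i.1+1) + 1 ≤ n-1) from by
          rintro ⟨-, h⟩; omega), show w i = 0 from dif_neg hcase]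
    have hsum : ∑ i : Fin n, c i • w i = 0 := by
      have h1 : x * e 1 = ∑ i : Fin n, c i • w i := by
        conv_lhs => rw [← b.sum_repr x]
        rw [Finset.sum_mul]
        exact Finset.sum_congr rfl fun i _ => by rw [smul_mul_assoc, hbw i]
      rw [← h1]
      exact hprod (e 1)
    have hc0 : ∀ i0 : Fin n, i0.1 + 2 ≤ n - 1 → c i0 = 0 := by
      intro i0 h0
      have h1 := congrArg (b.coord ⟨i0.1+1, by omega⟩) hsum
      rw [map_sum, map_zero] at h1
      have h2 : ∀ i ∈ Finset.univ, i ≠ i0 → b.coord ⟨i0.1+1, by omega⟩ (c i • w i) = 0 := by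
        intro i _ hne
        rw [map_smul]
        by_cases hcase : i.1 + 2 ≤ n - 1
        · rw [show w i = b ⟨i.1+1, by omega⟩ from dif_pos hcase, Basis.coord_apply,
            Basis.repr_self_apply,
            if_neg (show ¬(⟨i.1+1, by omega⟩ : Fin n) = ⟨i0.1+1, by omega⟩ from by
              intro hcontra
              apply hne
              apply Fin.ext
              have := Fin.mk.injEq (i.1+1) _ (i0.1+1) _ ▸ hcontra
              omega), smul_zero]
        · rw [show w i = 0 from dif_neg hcase, map_zero, smul_zero]
      have h3 := Finset.sum_eq_single_of_mem i0 (Finset.mem_univ i0) h2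
      rw [h3] at h1
      rw [map_smul, show w i0 = b ⟨i0.1+1, by omega⟩ from dif_pos h0, Basis.coord_apply,
        Basis.repr_self_apply, if_pos rfl] at h1
      simpa using h1
    -- x is a combination of the last two basis vectors
    have i1lt : n - 2 < n := by omega
    have i2lt : n - 1 < n := by omega
    refine ⟨c ⟨n-2, i1lt⟩, c ⟨n-1, i2lt⟩, ?_⟩
    have hpair : (⟨n-2, i1lt⟩ : Fin n) ≠ ⟨n-1, i2lt⟩ := by
      intro h
      have := Fin.mk.injEq (n-2) _ (n-1) _ ▸ h
      omega
    have hsub : ∑ i : Fin n, c i • b i = ∑ i ∈ ({⟨n-2, i1lt⟩, ⟨n-1, i2lt⟩} : Finset (Fin n)),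
        c i • b i := by
      symm
      apply Finset.sum_subset (Finset.subset_univ _)
      intro i _ hni
      simp only [Finset.mem_insert, Finset.mem_singleton] at hni
      push_neg at hni
      have : c i = 0 := by
        apply hc0
        have h1 : i.1 ≠ n - 2 := fun h => hni.1 (Fin.ext h)
        have h2 : i.1 ≠ n - 1 := fun h => hni.2 (Fin.ext h)
        omega
      rw [this, zero_smul]
    have hb1 : b ⟨n-2, i1lt⟩ = e (n-1) := by
      rw [hbv]
      congr 1
      show n - 2 + 1 = n - 1
      omega
    have hb2 : b ⟨n-1, i2lt⟩ = e n := by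
      rw [hbv]
      congr 1
      show n - 1 + 1 = n
      omega
    rw [← b.sum_repr x, hsub, Finset.sum_pair hpair, hb1, hb2]
  by_cases hr : r = 0 ∨ r = 2
  · rw [if_pos hr]
    have z2 : ∀ j : Fin n, e n * e (j.1+1) = 0 := by
      intro j
      rw [hT n (j.1+1) (by omega) (by omega) (by omega) (by omega),
        if_neg (show ¬(2 ≤ n + (j.1+1) ∧ n + (j.1+1) ≤ n - 1) from by omega),
        if_neg (show ¬((r = 1 ∨ r = 3) ∧ n = n ∧ j.1+1 = n) from by
          rintro ⟨h, -, -⟩; rcases hr with rfl | rfl <;> revert h <;> decide),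
        if_neg (show ¬((r = 2 ∨ r = 3) ∧ n = 1 ∧ j.1+1 = n) from by rintro ⟨-, h, -⟩; omega)]
      simp
    have hken : e n ∈ LinearMap.ker (LinearMap.mul ℂ A) := left_ann _ z2
    have hker_eq : LinearMap.ker (LinearMap.mul ℂ A) =
        Submodule.span ℂ {e (n-1), e n} := by
      apply le_antisymm
      · intro x hx
        obtain ⟨c₁, c₂, rfl⟩ := ker_sub x hx
        exact Submodule.add_mem _
          (Submodule.smul_mem _ _ (Submodule.subset_span (by simp)))
          (Submodule.smul_mem _ _ (Submodule.subset_span (by simp)))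
      · rw [Submodule.span_le]
        rintro z (rfl | rfl)
        · exact hken1
        · exact hken
    rw [hker_eq]
    -- finrank of the span of two independent vectors
    set g : Fin 2 → A := fun k => if k = 0 then e (n-1) else e n with hg
    have hrange : Set.range g = {e (n-1), e n} := by
      ext z
      constructor
      · rintro ⟨k, rfl⟩
        fin_cases k
        · left; simp [hg]
        · right; simp [hg]
      · rintro (rfl | rfl)
        · exact ⟨0, by simp [hg]⟩
        · exact ⟨1, by simp [hg]⟩
    set ι : Fin 2 → Fin n := fun k => ⟨n - 2 + k.1, by omega⟩ with hι
    have hinj : Function.Injective ι := by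
      intro a b hab
      have h2 : n - 2 + a.1 = n - 2 + b.1 := congrArg Fin.val hab
      apply Fin.ext
      omega
    have hind : LinearIndependent ℂ g := by
      have hcomp := hB.1.comp ι hinj
      have hfun : (fun i : Fin n => e (i.1+1)) ∘ ι = g := by
        funext k
        fin_cases k
        · show e (n - 2 + 0 + 1) = if (0 : Fin 2) = 0 then e (n-1) else e n
          rw [if_pos rfl]
          congr 1
          omega
        · show e (n - 2 + 1 + 1) = if (1 : Fin 2) = 0 then e (n-1) else e n
          rw [if_neg (by decide)]
          congr 1
          omega
      rwa [hfun] at hcomp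
    rw [← hrange, finrank_span_eq_card hind, Fintype.card_fin]
  · rw [if_neg hr]
    have hr13 : r = 1 ∨ r = 3 := by fin_cases r <;> revert hr <;> decide
    have hker_eq : LinearMap.ker (LinearMap.mul ℂ A) = Submodule.span ℂ {e (n-1)} := by
      apply le_antisymm
      · intro x hx
        obtain ⟨c₁, c₂, rfl⟩ := ker_sub x hx
        have hp1 : e (n-1) * e n = 0 := by
          rw [hT (n-1) n (by omega) (by omega) (by omega) (by omega),
            if_neg (show ¬(2 ≤ (n-1) + n ∧ (n-1) + n ≤ n - 1) from by omega),
            if_neg (show ¬((r = 1 ∨ r = 3) ∧ n-1 = n ∧ n = n) from by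
              rintro ⟨-, h, -⟩; omega),
            if_neg (show ¬((r = 2 ∨ r = 3) ∧ n-1 = 1 ∧ n = n) from by
              rintro ⟨-, h, -⟩; omega)]
          simp
        have hp2 : e n * e n = e (n-1) := by
          rw [hT n n (by omega) (by omega) (by omega) (by omega),
            if_neg (show ¬(2 ≤ n + n ∧ n + n ≤ n - 1) from by omega),
            if_pos (show (r = 1 ∨ r = 3) ∧ n = n ∧ n = n from ⟨hr13, rfl, rfl⟩),
            if_neg (show ¬((r = 2 ∨ r = 3) ∧ n = 1 ∧ n = n) from by
              rintro ⟨-, h, -⟩; omega), zero_add, add_zero]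
        have h0 := (mem_ker_iff _).1 hx (e n)
        rw [add_mul, smul_mul_assoc, smul_mul_assoc, hp1, hp2, smul_zero, zero_add] at h0
        have hc2 : c₂ = 0 := by
          rcases smul_eq_zero.1 h0 with h | h
          · exact h
          · exact absurd h hen1
        rw [hc2, zero_smul, add_zero]
        exact Submodule.smul_mem _ _ (Submodule.mem_span_singleton_self _)
      · rw [Submodule.span_le]
        rintro z rfl
        exact hken1
    rw [hker_eq, finrank_span_singleton hen1]

end Invariants

section NotIso

omit [NonUnitalRing A] [Module ℂ A] [SMulCommClass ℂ A A] [IsScalarTower ℂ A A]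
  [FiniteDimensional ℂ A] in
theorem mem_mulker_iff {B : Type*} [NonUnitalRing B] [Module ℂ B] [SMulCommClass ℂ B B]
    [IsScalarTower ℂ B B] (x : B) :
    x ∈ LinearMap.ker (LinearMap.mul ℂ B) ↔ ∀ y, x * y = 0 := by
  rw [LinearMap.mem_ker]
  constructor
  · intro h y
    have := LinearMap.congr_fun h y
    simpa only [LinearMap.mul_apply', LinearMap.zero_apply] using this
  · intro h
    apply LinearMap.ext
    intro y
    simpa only [LinearMap.mul_apply', LinearMap.zero_apply] using h y

omit [NonUnitalRing A] [Module ℂ A] [SMulCommClass ℂ A A] [IsScalarTower ℂ A A]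
  [FiniteDimensional ℂ A] in
theorem table_not_iso {n : ℕ} (hn : 3 < n) {r r' : Fin 4} (hrr : r ≠ r')
    (B : Type*) [NonUnitalRing B] [Module ℂ B] [SMulCommClass ℂ B B] [IsScalarTower ℂ B B]
    (C : Type*) [NonUnitalRing C] [Module ℂ C] [SMulCommClass ℂ C C] [IsScalarTower ℂ C C]
    (eB : ℕ → B) (eC : ℕ → C)
    (hB1 : IsBasisFam B n eB) (hB2 : FiliformTable B n r eB)
    (hC1 : IsBasisFam C n eC) (hC2 : FiliformTable C n r' eC) :
    ¬ ∃ φ : B ≃ₗ[ℂ] C, ∀ x y : B, φ (x * y) = φ x * φ y := by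
  rintro ⟨φ, hφ⟩
  have hφ' : ∀ u w : C, φ.symm (u * w) = φ.symm u * φ.symm w := by
    intro u w
    apply φ.injective
    rw [hφ, φ.apply_symm_apply, φ.apply_symm_apply, φ.apply_symm_apply]
  have hmap : Submodule.map (φ : B →ₗ[ℂ] C) (LinearMap.ker (LinearMap.mul ℂ B)) =
      LinearMap.ker (LinearMap.mul ℂ C) := by
    ext z
    simp only [Submodule.mem_map]
    constructor
    · rintro ⟨x, hx, rfl⟩
      rw [mem_mulker_iff]
      intro y
      have hx' : ∀ y, x * y = 0 := (mem_mulker_iff x).1 hx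
      calc (φ : B →ₗ[ℂ] C) x * y = φ x * φ (φ.symm y) := by rw [φ.apply_symm_apply]; rfl
        _ = φ (x * φ.symm y) := (hφ _ _).symm
        _ = φ 0 := by rw [hx']
        _ = 0 := map_zero φ
    · intro hz
      refine ⟨φ.symm z, ?_, by simp⟩
      rw [mem_mulker_iff]
      intro y
      have hz' : ∀ w, z * w = 0 := (mem_mulker_iff z).1 hz
      calc φ.symm z * y = φ.symm z * φ.symm (φ y) := by rw [φ.symm_apply_apply]
        _ = φ.symm (z * φ y) := (hφ' _ _).symm
        _ = φ.symm 0 := by rw [hz']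
        _ = 0 := map_zero φ.symm
  have hfr : finrank ℂ (LinearMap.ker (LinearMap.mul ℂ B)) =
      finrank ℂ (LinearMap.ker (LinearMap.mul ℂ C)) := by
    rw [← hmap, LinearEquiv.finrank_map_eq]
  rw [table_ker hn hB1 hB2, table_ker hn hC1 hC2] at hfr
  have haux : ∀ q : Fin 4, ¬(q = 0 ∨ q = 1) → (q = 2 ∨ q = 3) := by decide
  have haux2 : ∀ q : Fin 4, ¬(q = 2 ∨ q = 3) → (q = 0 ∨ q = 1) := by decide
  have hcomm : (r = 0 ∨ r = 1) ↔ (r' = 0 ∨ r' = 1) := by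
    constructor
    · intro h
      by_contra h'
      obtain ⟨u, w, huw⟩ := table_noncomm hn hC1 hC2 (haux r' h')
      apply huw
      have hBc := table_comm hn hB1 hB2 h
      calc u * w = φ (φ.symm u) * φ (φ.symm w) := by rw [φ.apply_symm_apply, φ.apply_symm_apply]
        _ = φ (φ.symm u * φ.symm w) := (hφ _ _).symm
        _ = φ (φ.symm w * φ.symm u) := by rw [hBc]
        _ = φ (φ.symm w) * φ (φ.symm u) := hφ _ _
        _ = w * u := by rw [φ.apply_symm_apply, φ.apply_symm_apply]
    · intro h
      by_contra h'
      obtain ⟨u, w, huw⟩ := table_noncomm hn hB1 hB2 (haux r h')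
      apply huw
      have hCc := table_comm hn hC1 hC2 h
      calc u * w = φ.symm (φ u) * φ.symm (φ w) := by
            rw [φ.symm_apply_apply, φ.symm_apply_apply]
        _ = φ.symm (φ u * φ w) := (hφ' _ _).symm
        _ = φ.symm (φ w * φ u) := by rw [hCc]
        _ = φ.symm (φ w) * φ.symm (φ u) := hφ' _ _
        _ = w * u := by rw [φ.symm_apply_apply, φ.symm_apply_apply]
  have hker2 : (r = 0 ∨ r = 2) ↔ (r' = 0 ∨ r' = 2) := by
    constructor
    · intro h
      by_contra h2
      rw [if_pos h, if_neg h2] at hfr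
      norm_num at hfr
    · intro h
      by_contra h2
      rw [if_neg h2, if_pos h] at hfr
      norm_num at hfr
  apply hrr
  fin_cases r <;> fin_cases r' <;> revert hcomm hker2 <;> decide

end NotIso

end Aux

/-- every `n`-dimensional (`n > 3`) filiform complex associative algebra has a
basis realizing exactly one of the four tables `μ_{1,1},…,μ_{1,4}`, and these four tables
define pairwise non-isomorphic algebras. -/
theorem filiform_classification (n : ℕ) (hn : 3 < n) [FiniteDimensional ℂ A]
    (hdim : Module.finrank ℂ A = n) (hfil : Filiform A n) :
    (∃! r : Fin 4, ∃ e : ℕ → A, IsBasisFam A n e ∧ FiliformTable A n r e) ∧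
    (∀ r r' : Fin 4, r ≠ r' →
      ∀ (B : Type*) [NonUnitalRing B] [Module ℂ B] [SMulCommClass ℂ B B] [IsScalarTower ℂ B B]
        (C : Type*) [NonUnitalRing C] [Module ℂ C] [SMulCommClass ℂ C C] [IsScalarTower ℂ C C]
        (eB : ℕ → B) (eC : ℕ → C),
        IsBasisFam B n eB → FiliformTable B n r eB →
        IsBasisFam C n eC → FiliformTable C n r' eC →
        ¬ ∃ φ : B ≃ₗ[ℂ] C, ∀ x y : B, φ (x * y) = φ x * φ y) := by
  constructor
  · obtain ⟨r₀, efam, hb, ht⟩ := exists_realization hdim hn hfil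
    refine ⟨r₀, ⟨efam, hb, ht⟩, ?_⟩
    rintro r' ⟨efam', hb', ht'⟩
    by_contra hne
    exact table_not_iso hn hne A A efam' efam hb' ht' hb ht
      ⟨LinearEquiv.refl ℂ A, fun x y => rfl⟩
  · intro r r' hrr B _ _ _ _ C _ _ _ _ eB eC hB1 hB2 hC1 hC2
    exact table_not_iso hn hrr B C eB eC hB1 hB2 hC1 hC2
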